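/- arXiv:2312.14477 — 4 statements merged into one kernel-verified Lean document; each statement's English description precedes it below -/
import Mathlib

section
/- Let A be a locally C*-algebra with C*-seminorms {p_λ}. An element a ∈ A can be written a = b*b + c with p_λ(c) = 0 for some b, c ∈ A (i.e., a is λ-positive) if and only if π_λ(a) is a positive element of the C*-algebra A_λ. -/
noncomputable section

/-- A C*-seminorm on a complex *-algebra. -/
structure IsCStarSeminorm {A : Type*} [Ring A] [StarRing A] [Algebra ℂ A] (p : A → ℝ) : Prop where
  map_zero : p 0 = 0
  add_le : ∀ a b, p (a + b) ≤ p a + p b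
  smul_eq : ∀ (c : ℂ) (a : A), p (c • a) = ‖c‖ * p a
  mul_le : ∀ a b, p (a * b) ≤ p a * p b
  star_eq : ∀ a, p (star a) = p a
  cstar : ∀ a, p (star a * a) = p a ^ 2

/-- A locally C*-algebra structure on a topological *-algebra `A`: an upward filtered
family of C*-seminorms indexed by `Λ` determining the topology, separating (Hausdorff),
and complete with respect to them. -/
structure LCS (Λ : Type*) [Preorder Λ] (A : Type*) [Ring A] [StarRing A] [Algebra ℂ A]
    [TopologicalSpace A] where
  p : Λ → A → ℝ
  seminorm : ∀ l, IsCStarSeminorm (p l)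
  mono : ∀ ⦃l₁ l₂⦄, l₁ ≤ l₂ → ∀ a, p l₁ a ≤ p l₂ a
  separates : ∀ a, (∀ l, p l a = 0) → a = 0
  nhds_iff : ∀ s : Set A, s ∈ nhds (0 : A) ↔ ∃ l, ∃ ε > (0 : ℝ), {a | p l a < ε} ⊆ s
  complete : ∀ f : Filter A, f.NeBot →
    (∀ l, ∀ ε > (0 : ℝ), ∃ s ∈ f, ∀ a ∈ s, ∀ b ∈ s, p l (a - b) < ε) → ∃ x, f ≤ nhds x

/-- A realization of the quotient of `A` by the kernel of the C*-seminorm `p` as a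
C*-algebra: a C*-algebra `B` together with a surjective *-homomorphism `π : A → B`
with `‖π a‖ = p a` (so that the norm of `B` is the norm induced by `p`). -/
structure CStarQuot (A : Type*) [Ring A] [StarRing A] [Algebra ℂ A] (p : A → ℝ) where
  B : Type*
  [nr : NormedRing B]
  [sr : StarRing B]
  [cs : CStarRing B]
  [na : NormedAlgebra ℂ B]
  [sm : StarModule ℂ B]
  [cp : CompleteSpace B]
  π : A →+* B
  map_star' : ∀ a, π (star a) = star (π a)
  map_smul' : ∀ (c : ℂ) (a : A), π (c • a) = c • π a
  surj : Function.Surjective π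
  norm_eq : ∀ a, ‖π a‖ = p a

attribute [instance] CStarQuot.nr CStarQuot.sr CStarQuot.cs CStarQuot.na CStarQuot.sm CStarQuot.cp

/-- `a` is `λ`-positive (i.e. `a = b* b + c` with `p_λ c = 0`) iff
`π_λ a` is a positive element of the C*-algebra `A_λ` (i.e. of the form `y* y`). -/
theorem statement3 {Λ A : Type*} [Preorder Λ] [IsDirected Λ (· ≤ ·)] [Ring A] [StarRing A]
    [Algebra ℂ A] [TopologicalSpace A] [IsTopologicalRing A] (L : LCS Λ A) (l : Λ)
    (Q : CStarQuot A (L.p l)) (a : A) :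
    (∃ b c : A, a = star b * b + c ∧ L.p l c = 0) ↔ ∃ y : Q.B, Q.π a = star y * y := by
  constructor
  · rintro ⟨b, c, rfl, hc⟩
    refine ⟨Q.π b, ?_⟩
    have hc0 : Q.π c = 0 := by
      have := Q.norm_eq c
      rw [hc] at this
      exact norm_eq_zero.mp this
    simp [map_add, map_mul, Q.map_star' b, hc0]
  · rintro ⟨y, hy⟩
    obtain ⟨b, rfl⟩ := Q.surj y
    refine ⟨b, a - star b * b, by abel, ?_⟩
    rw [← Q.norm_eq, norm_eq_zero]
    simp [map_sub, map_mul, Q.map_star' b, hy]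
end
end

section
/- Let {H; E; D_E} be a quantized domain and T ∈ C*(D_E). Then D_E is contained in the domain of the Hilbert-space adjoint T★ of T (viewed as a densely defined operator), and the restriction T* := T★|_{D_E} again belongs to C*(D_E). Moreover C*(D_E) equipped with this involution is a unital *-algebra. -/
noncomputable section

open scoped InnerProductSpace

/-- A quantized domain `{H; E; D_E}` in a Hilbert space `H`: an upward filtered family
`E = {H_ι}` of nonzero closed subspaces whose union is dense in `H`. -/
structure QD (Υ : Type*) [Preorder Υ] (H : Type*) [NormedAddCommGroup H]
    [InnerProductSpace ℂ H] [CompleteSpace H] where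
  E : Υ → Submodule ℂ H
  isClosed : ∀ i, IsClosed (E i : Set H)
  nonzero : ∀ i, E i ≠ ⊥
  mono : ∀ ⦃i j⦄, i ≤ j → E i ≤ E j
  dense : Dense (⋃ i, (E i : Set H))

namespace QD

variable {Υ : Type*} [Preorder Υ] {H : Type*} [NormedAddCommGroup H]
  [InnerProductSpace ℂ H] [CompleteSpace H] (Q : QD Υ H)

/-- The union space `D_E = ⋃ ι H_ι` (as a submodule of `H`). -/
def D : Submodule ℂ H := ⨆ i, Q.E i

/-- The orthogonal projection `P_ι` of `H` onto `H_ι`, as a bounded operator on `H`. -/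
def proj (i : Υ) : H →L[ℂ] H :=
  haveI : CompleteSpace (Q.E i) := (Q.isClosed i).completeSpace_coe
  (Q.E i).subtypeL.comp (Submodule.orthogonalProjectionOnto (Q.E i))

theorem proj_mem_E (i : Υ) (x : H) : Q.proj i x ∈ Q.E i := by
  haveI : CompleteSpace (Q.E i) := (Q.isClosed i).completeSpace_coe
  simp [QD.proj]

theorem mem_D_of_mem {i : Υ} {x : H} (h : x ∈ Q.E i) : x ∈ Q.D :=
  Submodule.mem_iSup_of_mem i h

theorem proj_mem_D (i : Υ) (x : H) : Q.proj i x ∈ Q.D :=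
  Q.mem_D_of_mem (Q.proj_mem_E i x)

/-- The composition `T P_ι`, as a map `H → H` (well defined since `ran P_ι ⊆ D_E`). -/
def applyP (T : Q.D →ₗ[ℂ] Q.D) (i : Υ) (x : H) : H :=
  (T ⟨Q.proj i x, Q.proj_mem_D i x⟩ : H)

/-- Membership in `C*(D_E)`: for every `ι`, `T P_ι = P_ι T P_ι` is a bounded operator
on `H` and `P_ι T ⊆ T P_ι`. -/
def InCStar (T : Q.D →ₗ[ℂ] Q.D) : Prop :=
  ∀ i : Υ,
    (∃ C : ℝ, ∀ x : H, ‖Q.applyP T i x‖ ≤ C * ‖x‖) ∧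
    (∀ x : H, Q.proj i (Q.applyP T i x) = Q.applyP T i x) ∧
    (∀ x : Q.D, Q.proj i ((T x : H)) = Q.applyP T i (x : H))

/-- The restriction to `D_E` of a bounded operator on `H` leaving `D_E` invariant. -/
def restrictD (T : H →L[ℂ] H) (h : ∀ x : Q.D, T (x : H) ∈ Q.D) : Q.D →ₗ[ℂ] Q.D where
  toFun x := ⟨T x, h x⟩
  map_add' x y := by ext : 1; simp
  map_smul' c x := by ext : 1; simp

end QD

namespace QD

variable {Υ : Type*} [Preorder Υ] {H : Type*} [NormedAddCommGroup H]
  [InnerProductSpace ℂ H] [CompleteSpace H] (Q : QD Υ H)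

theorem proj_eq_self {i : Υ} {x : H} (h : x ∈ Q.E i) : Q.proj i x = x := by
  haveI : CompleteSpace (Q.E i) := (Q.isClosed i).completeSpace_coe
  exact Submodule.starProjection_eq_self_iff.mpr h

theorem proj_proj (i : Υ) (x : H) : Q.proj i (Q.proj i x) = Q.proj i x :=
  Q.proj_eq_self (Q.proj_mem_E i x)

theorem inner_proj_left (i : Υ) (x y : H) :
    ⟪Q.proj i x, y⟫_ℂ = ⟪x, Q.proj i y⟫_ℂ := by
  haveI : CompleteSpace (Q.E i) := (Q.isClosed i).completeSpace_coe
  exact Submodule.inner_starProjection_left_eq_right (Q.E i) x y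

theorem norm_proj_le (i : Υ) (x : H) : ‖Q.proj i x‖ ≤ 1 * ‖x‖ := by
  haveI : CompleteSpace (Q.E i) := (Q.isClosed i).completeSpace_coe
  have h1 : ‖Q.proj i x‖ = ‖Submodule.orthogonalProjectionOnto (Q.E i) x‖ := rfl
  rw [h1]
  calc ‖Submodule.orthogonalProjectionOnto (Q.E i) x‖ ≤ ‖Submodule.orthogonalProjectionOnto (Q.E i)‖ * ‖x‖ :=
        (Submodule.orthogonalProjectionOnto (Q.E i)).le_opNorm x
    _ ≤ 1 * ‖x‖ := by
        gcongr
        exact Submodule.orthogonalProjectionOnto_norm_le _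

/-- Two vectors with equal inner products against every element of `D_E` coincide. -/
theorem eq_of_inner_D {a b : H} (h : ∀ ζ : Q.D, ⟪(ζ : H), a⟫_ℂ = ⟪(ζ : H), b⟫_ℂ) :
    a = b := by
  have hcl : IsClosed {z : H | ⟪z, a⟫_ℂ = ⟪z, b⟫_ℂ} :=
    isClosed_eq (continuous_id.inner continuous_const) (continuous_id.inner continuous_const)
  have hsub : (⋃ i, (Q.E i : Set H)) ⊆ {z : H | ⟪z, a⟫_ℂ = ⟪z, b⟫_ℂ} := by
    rintro z ⟨s, ⟨i, rfl⟩, hz⟩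
    exact h ⟨z, Q.mem_D_of_mem hz⟩
  have hall : ∀ z : H, ⟪z, a⟫_ℂ = ⟪z, b⟫_ℂ := by
    intro z
    have : (Set.univ : Set H) ⊆ {z : H | ⟪z, a⟫_ℂ = ⟪z, b⟫_ℂ} := by
      rw [← Q.dense.closure_eq]
      exact closure_minimal hsub hcl
    exact this (Set.mem_univ z)
  exact ext_inner_left ℂ hall

include Q in
theorem nonempty_index : Nonempty Υ := by
  by_contra h
  haveI : IsEmpty Υ := not_nonempty_iff.mp h
  have h0 := Q.dense (0 : H)
  rw [Set.iUnion_of_empty, closure_empty] at h0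
  simp at h0

theorem mem_D_iff [IsDirected Υ (· ≤ ·)] {x : H} : x ∈ Q.D ↔ ∃ i, x ∈ Q.E i := by
  haveI : Nonempty Υ := Q.nonempty_index
  constructor
  · intro h
    rcases directed_of (· ≤ ·) (Classical.arbitrary Υ) (Classical.arbitrary Υ) with _
    exact (Submodule.mem_iSup_of_directed Q.E
      (fun i j => (directed_of (· ≤ ·) i j).imp
        fun k hk => ⟨Q.mono hk.1, Q.mono hk.2⟩)).mp h
  · rintro ⟨i, hi⟩; exact Q.mem_D_of_mem hi

section Ops

variable (T : Q.D →ₗ[ℂ] Q.D)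

theorem applyP_coe (i : Υ) (x : H) :
    Q.applyP T i x = (T ⟨Q.proj i x, Q.proj_mem_D i x⟩ : H) := rfl

theorem applyP_proj (i : Υ) (x : H) : Q.applyP T i (Q.proj i x) = Q.applyP T i x := by
  simp only [QD.applyP]
  exact congrArg (fun z : Q.D => (T z : H)) (Subtype.ext (Q.proj_proj i x))

theorem T_apply_of_mem {i : Υ} (ξ : Q.D) (h : (ξ : H) ∈ Q.E i) :
    (T ξ : H) = Q.applyP T i (ξ : H) :=
  congrArg (fun z : Q.D => (T z : H)) (Subtype.ext (Q.proj_eq_self h).symm)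

/-- `T P_ι` as a bounded operator on `H`, for `T ∈ C*(D_E)`. -/
def TP (hT : Q.InCStar T) (i : Υ) : H →L[ℂ] H :=
  LinearMap.mkContinuousOfExistsBound
    { toFun := Q.applyP T i
      map_add' := fun x y => by
        simp only [QD.applyP]
        rw [show (⟨Q.proj i (x + y), Q.proj_mem_D i (x + y)⟩ : Q.D)
            = ⟨Q.proj i x, Q.proj_mem_D i x⟩ + ⟨Q.proj i y, Q.proj_mem_D i y⟩ from
          Subtype.ext (by simp), map_add, Submodule.coe_add]
      map_smul' := fun c x => by
        simp only [QD.applyP, RingHom.id_apply]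
        rw [show (⟨Q.proj i (c • x), Q.proj_mem_D i (c • x)⟩ : Q.D)
            = c • ⟨Q.proj i x, Q.proj_mem_D i x⟩ from
          Subtype.ext (by simp), map_smul, Submodule.coe_smul] } (hT i).1

variable (hT : Q.InCStar T)

theorem TP_apply (i : Υ) (x : H) : Q.TP T hT i x = Q.applyP T i x := rfl

theorem proj_TP (i : Υ) (x : H) : Q.proj i (Q.TP T hT i x) = Q.TP T hT i x := (hT i).2.1 x

theorem proj_T (i : Υ) (x : Q.D) : Q.proj i (T x : H) = Q.TP T hT i (x : H) := (hT i).2.2 x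

theorem TP_proj (i : Υ) (x : H) : Q.TP T hT i (Q.proj i x) = Q.TP T hT i x :=
  Q.applyP_proj T i x

theorem adjoint_TP_spec {i : Υ} {ξ : H} (hξ : ξ ∈ Q.E i) (ζ : Q.D) :
    ⟪(T ζ : H), ξ⟫_ℂ = ⟪(ζ : H), (Q.TP T hT i).adjoint ξ⟫_ℂ := by
  rw [ContinuousLinearMap.adjoint_inner_right]
  conv_lhs => rw [← Q.proj_eq_self hξ]
  rw [← Q.inner_proj_left, Q.proj_T T hT]

theorem adjoint_TP_proj_eq (i : Υ) (ξ : H) :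
    Q.proj i ((Q.TP T hT i).adjoint ξ) = (Q.TP T hT i).adjoint ξ := by
  refine ext_inner_left ℂ fun v => ?_
  rw [← Q.inner_proj_left, ContinuousLinearMap.adjoint_inner_right,
    ContinuousLinearMap.adjoint_inner_right, Q.TP_proj T hT]

theorem adjoint_TP_mem (i : Υ) (ξ : H) : (Q.TP T hT i).adjoint ξ ∈ Q.E i := by
  rw [← Q.adjoint_TP_proj_eq T hT i ξ]
  exact Q.proj_mem_E i _

theorem adjoint_TP_of_proj (i : Υ) (ξ : H) :
    (Q.TP T hT i).adjoint (Q.proj i ξ) = (Q.TP T hT i).adjoint ξ := by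
  refine ext_inner_left ℂ fun v => ?_
  rw [ContinuousLinearMap.adjoint_inner_right, ContinuousLinearMap.adjoint_inner_right,
    ← Q.inner_proj_left, Q.proj_TP T hT]

end Ops

section Adj

variable [IsDirected Υ (· ≤ ·)] (T : Q.D →ₗ[ℂ] Q.D) (hT : Q.InCStar T)

/-- underlying function of the adjoint `T*` restricted to `D_E`. -/
def adjFun (ξ : Q.D) : H :=
  (Q.TP T hT (Classical.choose (Q.mem_D_iff.mp ξ.2))).adjoint (ξ : H)

theorem adjFun_spec (ξ ζ : Q.D) :
    ⟪(T ζ : H), (ξ : H)⟫_ℂ = ⟪(ζ : H), Q.adjFun T hT ξ⟫_ℂ :=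
  Q.adjoint_TP_spec T hT (Classical.choose_spec (Q.mem_D_iff.mp ξ.2)) ζ

theorem adjFun_eq {i : Υ} (ξ : Q.D) (h : (ξ : H) ∈ Q.E i) :
    Q.adjFun T hT ξ = (Q.TP T hT i).adjoint (ξ : H) :=
  Q.eq_of_inner_D fun ζ =>
    (Q.adjFun_spec T hT ξ ζ).symm.trans (Q.adjoint_TP_spec T hT h ζ)

theorem adjFun_mem (ξ : Q.D) : Q.adjFun T hT ξ ∈ Q.D :=
  Q.mem_D_of_mem (Q.adjoint_TP_mem T hT _ (ξ : H))

/-- The involution `T ↦ T*` on `C*(D_E)`. -/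
def adj : Q.D →ₗ[ℂ] Q.D where
  toFun ξ := ⟨Q.adjFun T hT ξ, Q.adjFun_mem T hT ξ⟩
  map_add' ξ ζ := by
    have h : ∀ v : Q.D, ⟪(v : H), Q.adjFun T hT (ξ + ζ)⟫_ℂ
        = ⟪(v : H), Q.adjFun T hT ξ + Q.adjFun T hT ζ⟫_ℂ := fun v => by
      rw [← Q.adjFun_spec T hT, inner_add_right, ← Q.adjFun_spec T hT,
        ← Q.adjFun_spec T hT, Submodule.coe_add, inner_add_right]
    exact Subtype.ext (Q.eq_of_inner_D h)
  map_smul' c ξ := by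
    have h : ∀ v : Q.D, ⟪(v : H), Q.adjFun T hT (c • ξ)⟫_ℂ
        = ⟪(v : H), c • Q.adjFun T hT ξ⟫_ℂ := fun v => by
      rw [← Q.adjFun_spec T hT, inner_smul_right, ← Q.adjFun_spec T hT,
        Submodule.coe_smul, inner_smul_right]
    exact Subtype.ext (Q.eq_of_inner_D h)

theorem adj_coe (ξ : Q.D) : (Q.adj T hT ξ : H) = Q.adjFun T hT ξ := rfl

theorem applyP_adj (i : Υ) (x : H) :
    Q.applyP (Q.adj T hT) i x = (Q.TP T hT i).adjoint x := by
  rw [Q.applyP_coe, Q.adj_coe,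
    Q.adjFun_eq T hT ⟨Q.proj i x, Q.proj_mem_D i x⟩ (Q.proj_mem_E i x)]
  exact Q.adjoint_TP_of_proj T hT i x

theorem adj_inCStar : Q.InCStar (Q.adj T hT) := by
  intro i
  refine ⟨⟨‖(Q.TP T hT i).adjoint‖, fun x => ?_⟩, fun x => ?_, fun x => ?_⟩
  · rw [Q.applyP_adj T hT]
    exact (Q.TP T hT i).adjoint.le_opNorm x
  · rw [Q.applyP_adj T hT]
    exact Q.adjoint_TP_proj_eq T hT i x
  · rw [Q.applyP_adj T hT]
    refine ext_inner_left ℂ fun v => ?_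
    rw [← Q.inner_proj_left, Q.adj_coe, ← Q.adjFun_spec T hT x ⟨Q.proj i v, Q.proj_mem_D i v⟩,
      ContinuousLinearMap.adjoint_inner_right]
    rfl

end Adj

end QD
/-- for `T ∈ C*(D_E)`, `D_E ⊆ dom(T★)` and `T* := T★|_{D_E} ∈ C*(D_E)`;
moreover `C*(D_E)` with this involution is a unital *-algebra. -/
theorem statement5 {Υ : Type*} [Preorder Υ] [IsDirected Υ (· ≤ ·)] {H : Type*}
    [NormedAddCommGroup H] [InnerProductSpace ℂ H] [CompleteSpace H] (Q : QD Υ H) :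
    -- D_E ⊆ dom(T★): every ξ ∈ D_E lies in the domain of the adjoint of T
    (∀ T : Q.D →ₗ[ℂ] Q.D, Q.InCStar T → ∀ ξ : Q.D, ∃ η : H,
        ∀ ζ : Q.D, ⟪(T ζ : H), (ξ : H)⟫_ℂ = ⟪(ζ : H), η⟫_ℂ) ∧
    -- T* = T★|_{D_E} maps D_E to D_E and belongs again to C*(D_E)
    (∀ T : Q.D →ₗ[ℂ] Q.D, Q.InCStar T → ∃ S : Q.D →ₗ[ℂ] Q.D, Q.InCStar S ∧
        ∀ ξ ζ : Q.D, ⟪(T ζ : H), (ξ : H)⟫_ℂ = ⟪(ζ : H), (S ξ : H)⟫_ℂ) ∧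
    -- C*(D_E) is a unital algebra
    Q.InCStar LinearMap.id ∧
    (∀ T S : Q.D →ₗ[ℂ] Q.D, Q.InCStar T → Q.InCStar S →
        Q.InCStar (T + S) ∧ Q.InCStar (T ∘ₗ S)) ∧
    (∀ (c : ℂ) (T : Q.D →ₗ[ℂ] Q.D), Q.InCStar T → Q.InCStar (c • T)) ∧
    -- the adjoint is unique, so `T ↦ T*` is a well-defined map; it is involutive
    (∀ T S S' : Q.D →ₗ[ℂ] Q.D, Q.InCStar T →
        (∀ ξ ζ : Q.D, ⟪(T ζ : H), (ξ : H)⟫_ℂ = ⟪(ζ : H), (S ξ : H)⟫_ℂ) →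
        (∀ ξ ζ : Q.D, ⟪(T ζ : H), (ξ : H)⟫_ℂ = ⟪(ζ : H), (S' ξ : H)⟫_ℂ) → S = S') ∧
    (∀ T S : Q.D →ₗ[ℂ] Q.D, Q.InCStar T →
        (∀ ξ ζ : Q.D, ⟪(T ζ : H), (ξ : H)⟫_ℂ = ⟪(ζ : H), (S ξ : H)⟫_ℂ) →
        ∀ ξ ζ : Q.D, ⟪(S ζ : H), (ξ : H)⟫_ℂ = ⟪(ζ : H), (T ξ : H)⟫_ℂ) := by
  refine ⟨?_, ?_, ?_, ?_, ?_, ?_, ?_⟩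
  · -- D_E ⊆ dom(T★)
    intro T hT ξ
    obtain ⟨i, hi⟩ := Q.mem_D_iff.mp ξ.2
    exact ⟨(Q.TP T hT i).adjoint (ξ : H), fun ζ => Q.adjoint_TP_spec T hT hi ζ⟩
  · -- T* ∈ C*(D_E)
    intro T hT
    exact ⟨Q.adj T hT, Q.adj_inCStar T hT, fun ξ ζ => Q.adjFun_spec T hT ξ ζ⟩
  · -- identity
    intro i
    have key : ∀ x : H, Q.applyP LinearMap.id i x = Q.proj i x := fun _ => rfl
    refine ⟨⟨1, fun x => ?_⟩, fun x => ?_, fun x => ?_⟩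
    · rw [key]; exact Q.norm_proj_le i x
    · rw [key]; exact Q.proj_proj i x
    · rw [key]; rfl
  · -- sum and composition
    intro T S hT hS
    constructor
    · intro i
      obtain ⟨⟨CT, hCT⟩, hT2, hT3⟩ := hT i
      obtain ⟨⟨CS, hCS⟩, hS2, hS3⟩ := hS i
      have key : ∀ x : H, Q.applyP (T + S) i x = Q.applyP T i x + Q.applyP S i x :=
        fun _ => rfl
      refine ⟨⟨CT + CS, fun x => ?_⟩, fun x => ?_, fun x => ?_⟩
      · rw [key, add_mul]
        exact (norm_add_le _ _).trans (add_le_add (hCT x) (hCS x))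
      · rw [key, map_add, hT2, hS2]
      · have hx : Q.proj i ((T x : H) + (S x : H)) = Q.applyP (T + S) i (x : H) := by
          rw [map_add, hT3, hS3, key]
        exact hx
    · intro i
      obtain ⟨⟨CT, hCT⟩, hT2, hT3⟩ := hT i
      obtain ⟨⟨CS, hCS⟩, hS2, hS3⟩ := hS i
      have hCT' : ∀ x : H, ‖Q.applyP T i x‖ ≤ max CT 0 * ‖x‖ := fun x =>
        (hCT x).trans (mul_le_mul_of_nonneg_right (le_max_left _ _) (norm_nonneg x))
      have hCS' : ∀ x : H, ‖Q.applyP S i x‖ ≤ max CS 0 * ‖x‖ := fun x =>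
        (hCS x).trans (mul_le_mul_of_nonneg_right (le_max_left _ _) (norm_nonneg x))
      have key : ∀ x : H, Q.applyP (T ∘ₗ S) i x = Q.applyP T i (Q.applyP S i x) := by
        intro x
        refine congrArg (fun z : Q.D => (T z : H)) (Subtype.ext ?_)
        exact (hS2 x).symm
      refine ⟨⟨max CT 0 * max CS 0, fun x => ?_⟩, fun x => ?_, fun x => ?_⟩
      · rw [key, mul_assoc]
        exact (hCT' _).trans (mul_le_mul_of_nonneg_left (hCS' x) (le_max_right CT 0))
      · rw [key, hT2]
      · have h1 : Q.proj i ((T (S x) : H)) = Q.applyP T i ((S x : H)) := hT3 (S x)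
        have h2 : Q.applyP T i ((S x : H)) = Q.applyP T i (Q.applyP S i (x : H)) := by
          refine congrArg (fun z : Q.D => (T z : H)) (Subtype.ext ?_)
          show Q.proj i ((S x : H)) = Q.proj i (Q.applyP S i (x : H))
          rw [hS3 x, hS2]
        have h3 : Q.proj i ((T (S x) : H)) = Q.applyP (T ∘ₗ S) i (x : H) := by
          rw [h1, h2, key]
        exact h3
  · -- scalar multiples
    intro c T hT i
    obtain ⟨⟨CT, hCT⟩, hT2, hT3⟩ := hT i
    have hCT' : ∀ x : H, ‖Q.applyP T i x‖ ≤ max CT 0 * ‖x‖ := fun x =>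
      (hCT x).trans (mul_le_mul_of_nonneg_right (le_max_left _ _) (norm_nonneg x))
    have key : ∀ x : H, Q.applyP (c • T) i x = c • Q.applyP T i x := fun _ => rfl
    refine ⟨⟨‖c‖ * max CT 0, fun x => ?_⟩, fun x => ?_, fun x => ?_⟩
    · rw [key, norm_smul, mul_assoc]
      exact mul_le_mul_of_nonneg_left (hCT' x) (norm_nonneg c)
    · rw [key, map_smul, hT2]
    · have hx : Q.proj i (c • (T x : H)) = Q.applyP (c • T) i (x : H) := by
        rw [map_smul, hT3, key]
      exact hx
  · -- uniqueness of the adjoint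
    intro T S S' _ h1 h2
    refine LinearMap.ext fun ξ => Subtype.ext (Q.eq_of_inner_D fun ζ => ?_)
    rw [← h1 ξ ζ, h2 ξ ζ]
  · -- the involution
    intro T S _ h ξ ζ
    rw [← inner_conj_symm ((ζ : H)) ((T ξ : H)), h ζ ξ, inner_conj_symm]
end
end

section
/- Let A be a unital locally C*-algebra with C*-seminorms {p_λ}_{λ∈Λ} and π: A → B(H) a local representation on a Hilbert space H. Then π is irreducible (π(A)' = ℂ·I) if and only if there exist λ₀ ∈ Λ and an irreducible representation π_{λ₀}: A_{λ₀} → B(H) of the C*-algebra A_{λ₀} such that π = π_{λ₀} ∘ π^A_{λ₀}. -/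
noncomputable section

open scoped ComplexOrder

section BH

variable {Λ A : Type*} [Preorder Λ] [Ring A] [StarRing A] [Algebra ℂ A] [StarModule ℂ A] [TopologicalSpace A]
variable {H : Type*} [NormedAddCommGroup H] [InnerProductSpace ℂ H] [CompleteSpace H]

/-- `λ`-positivity of a matrix over `A`: `[a] = b* b + c` with `p_λ`-null `c`
(equivalently, `π_λ^{(n)}([a])` is positive in `M_n(A_λ)`). -/
def MatLPos (L : LCS Λ A) (l : Λ) {n : ℕ} (a : Matrix (Fin n) (Fin n) A) : Prop :=
  ∃ b : Matrix (Fin n) (Fin n) A,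
    ∀ j k, L.p l (a j k - ∑ m, star (b m j) * b m k) = 0

/-- A linear map `φ` on the local operator system `S`, with values in `B(H)`, is
`λ`-completely positive: `φ⁽ⁿ⁾([a])` is positive whenever `[a]` is `λ`-positive, and
`φ⁽ⁿ⁾([a])` vanishes whenever `p_λ^{(n)}([a]) = 0`.  (These are exactly the maps of
the form `φ_λ ∘ π_λ|_S` for a completely positive `φ_λ` on `S_λ = π_λ(S)`.) -/
def LambdaCP (L : LCS Λ A) (S : Submodule ℂ A) (l : Λ)
    (φ : S →ₗ[ℂ] (H →L[ℂ] H)) : Prop :=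
  (∀ (n : ℕ) (a : Matrix (Fin n) (Fin n) A) (ha : ∀ j k, a j k ∈ S), MatLPos L l a →
      ∀ ξ : Fin n → H,
        0 ≤ ∑ j, ∑ k, (inner ℂ (ξ j) ((φ ⟨a j k, ha j k⟩) (ξ k)) : ℂ)) ∧
  (∀ (a : A) (ha : a ∈ S), L.p l a = 0 → φ ⟨a, ha⟩ = 0)

/-- A local completely positive map `S → B(H)`. -/
def LocalCP (L : LCS Λ A) (S : Submodule ℂ A) (φ : S →ₗ[ℂ] (H →L[ℂ] H)) : Prop :=
  ∃ l, LambdaCP L S l φ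

/-- `λ`-complete positivity for maps defined on all of `A`. -/
def LambdaCPA (L : LCS Λ A) (l : Λ) (φ : A →ₗ[ℂ] (H →L[ℂ] H)) : Prop :=
  (∀ (n : ℕ) (a : Matrix (Fin n) (Fin n) A), MatLPos L l a →
      ∀ ξ : Fin n → H, 0 ≤ ∑ j, ∑ k, (inner ℂ (ξ j) ((φ (a j k)) (ξ k)) : ℂ)) ∧
  (∀ a : A, L.p l a = 0 → φ a = 0)

/-- A local completely positive map `A → B(H)`. -/
def LocalCPA (L : LCS Λ A) (φ : A →ₗ[ℂ] (H →L[ℂ] H)) : Prop :=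
  ∃ l, LambdaCPA L l φ

/-- A representation of `A_λ` on `H`, encoded at the level of `A`: a unital
*-homomorphism `A → B(H)` with `‖π a‖ ≤ p_λ a` (such maps correspond exactly to the
representations of the C*-algebra `A_λ`). -/
def RepAt (L : LCS Λ A) (l : Λ) (π : A →⋆ₐ[ℂ] (H →L[ℂ] H)) : Prop :=
  ∀ a, ‖π a‖ ≤ L.p l a

/-- A local representation of `A` on the Hilbert space `H`, i.e. a continuous unital
*-homomorphism `A → B(H)`. -/
def IsLocalRep (L : LCS Λ A) (π : A →⋆ₐ[ℂ] (H →L[ℂ] H)) : Prop :=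
  ∃ l, RepAt L l π

/-- Irreducibility: the commutant of the range is `ℂ·1`. -/
def Irr (π : A →⋆ₐ[ℂ] (H →L[ℂ] H)) : Prop :=
  ∀ T : H →L[ℂ] H, (∀ a, Commute T (π a)) → ∃ c : ℂ, T = c • (1 : H →L[ℂ] H)

/-- The restriction `π|_S` of a *-homomorphism `π : A → B(H)` to `S`. -/
def restrictS (S : Submodule ℂ A) (π : A →⋆ₐ[ℂ] (H →L[ℂ] H)) :
    S →ₗ[ℂ] (H →L[ℂ] H) :=
  π.toAlgHom.toLinearMap.comp S.subtype

/-- A local boundary representation for `S`: an irreducible local representation of `A`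
such that the only local CP extension of `π|_S` to `A` is `π` itself. -/
def IsLocalBoundaryRep (L : LCS Λ A) (S : Submodule ℂ A)
    (π : A →⋆ₐ[ℂ] (H →L[ℂ] H)) : Prop :=
  IsLocalRep L π ∧ Irr π ∧
    ∀ ψ : A →ₗ[ℂ] (H →L[ℂ] H), LocalCPA L ψ → (∀ a ∈ S, ψ a = π a) → ∀ a, ψ a = π a

/-- A boundary representation of `A_λ` for the operator system `S_λ`, encoded at the
level of `A`: an irreducible representation of `A_λ` whose restriction to `S_λ` has
the unique completely positive extension property. -/
def IsBoundaryRepAt (L : LCS Λ A) (S : Submodule ℂ A) (l : Λ)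
    (π : A →⋆ₐ[ℂ] (H →L[ℂ] H)) : Prop :=
  RepAt L l π ∧ Irr π ∧
    ∀ ψ : A →ₗ[ℂ] (H →L[ℂ] H), LambdaCPA L l ψ → (∀ a ∈ S, ψ a = π a) → ∀ a, ψ a = π a

/-- Purity of a local CP map. -/
def PureLocalCP (L : LCS Λ A) (S : Submodule ℂ A) (φ : S →ₗ[ℂ] (H →L[ℂ] H)) : Prop :=
  LocalCP L S φ ∧ ∀ ψ : S →ₗ[ℂ] (H →L[ℂ] H), LocalCP L S ψ → LocalCP L S (φ - ψ) →
    ∃ t : ℝ, 0 ≤ t ∧ t ≤ 1 ∧ ψ = (t : ℂ) • φ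

/-- Purity of a (`λ`-level) CP map, i.e. purity of the induced CP map on `S_λ`. -/
def PureAt (L : LCS Λ A) (S : Submodule ℂ A) (l : Λ)
    (φ : S →ₗ[ℂ] (H →L[ℂ] H)) : Prop :=
  LambdaCP L S l φ ∧ ∀ ψ : S →ₗ[ℂ] (H →L[ℂ] H), LambdaCP L S l ψ →
    LambdaCP L S l (φ - ψ) → ∃ t : ℝ, 0 ≤ t ∧ t ≤ 1 ∧ ψ = (t : ℂ) • φ

/-- `S` generates `A` as a locally C*-algebra: no proper closed *-subalgebra
contains `S`. -/
def GeneratesLCS (S : Submodule ℂ A) : Prop :=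
  ∀ B : StarSubalgebra ℂ A, IsClosed (B : Set A) → (S : Set A) ⊆ B → B = ⊤

end BH
/-- a local representation `π : A → B(H)` is irreducible iff there are
`λ₀` and an irreducible representation `π_{λ₀} : A_{λ₀} → B(H)` with
`π = π_{λ₀} ∘ π^A_{λ₀}`. -/
theorem statement8 {Λ A : Type*} [Preorder Λ] [IsDirected Λ (· ≤ ·)] [Ring A]
    [StarRing A] [Algebra ℂ A] [StarModule ℂ A] [TopologicalSpace A] [IsTopologicalRing A]
    {H : Type*} [NormedAddCommGroup H] [InnerProductSpace ℂ H] [CompleteSpace H]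
    (L : LCS Λ A) (Qs : ∀ l, CStarQuot A (L.p l))
    (π : A →⋆ₐ[ℂ] (H →L[ℂ] H)) (hπ : IsLocalRep L π) :
    Irr π ↔ ∃ (l₀ : Λ) (ρ : (Qs l₀).B →⋆ₐ[ℂ] (H →L[ℂ] H)),
      (∀ T : H →L[ℂ] H, (∀ b, Commute T (ρ b)) → ∃ c : ℂ, T = c • (1 : H →L[ℂ] H)) ∧
      ∀ a, π a = ρ ((Qs l₀).π a) := by
  constructor
  · intro hirr
    obtain ⟨l, hl⟩ := hπ
    set Q := Qs l with hQ
    set g : Q.B → A := Function.surjInv Q.surj with hg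
    have key : ∀ a, π (g (Q.π a)) = π a := by
      intro a
      have h0 : Q.π (g (Q.π a) - a) = 0 := by
        simp [g, map_sub, Function.surjInv_eq Q.surj]
      have hp : L.p l (g (Q.π a) - a) = 0 := by
        rw [← Q.norm_eq, h0, norm_zero]
      have hπ0 : π (g (Q.π a) - a) = 0 := by
        have h := hl (g (Q.π a) - a)
        rw [hp] at h
        exact norm_le_zero_iff.mp h
      have := map_sub π (g (Q.π a)) a
      rw [hπ0] at this
      exact (sub_eq_zero.mp this.symm)
    have keyf : ∀ b, π (g b) = π (g (Q.π (g b))) := by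
      intro b; rw [key]
    have hgπ : ∀ b, Q.π (g b) = b := Function.surjInv_eq Q.surj
    let ρ : Q.B →⋆ₐ[ℂ] (H →L[ℂ] H) :=
      { toFun := fun b => π (g b)
        map_one' := by
          show π (g 1) = 1
          rw [← map_one Q.π, key, map_one]
        map_mul' := by
          intro x y
          obtain ⟨a, rfl⟩ := Q.surj x
          obtain ⟨b, rfl⟩ := Q.surj y
          show π (g (Q.π a * Q.π b)) = π (g (Q.π a)) * π (g (Q.π b))
          rw [← map_mul Q.π, key, key, key, map_mul]
        map_zero' := by
          show π (g 0) = 0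
          rw [← map_zero Q.π, key, map_zero]
        map_add' := by
          intro x y
          obtain ⟨a, rfl⟩ := Q.surj x
          obtain ⟨b, rfl⟩ := Q.surj y
          show π (g (Q.π a + Q.π b)) = π (g (Q.π a)) + π (g (Q.π b))
          rw [← map_add Q.π, key, key, key, map_add]
        commutes' := by
          intro c
          show π (g (algebraMap ℂ Q.B c)) = algebraMap ℂ _ c
          have h1 : (algebraMap ℂ Q.B) c = Q.π (c • 1) := by
            rw [Q.map_smul', map_one, Algebra.algebraMap_eq_smul_one]
          rw [h1, key, map_smul, map_one, Algebra.algebraMap_eq_smul_one]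
        map_star' := by
          intro x
          obtain ⟨a, rfl⟩ := Q.surj x
          show π (g (star (Q.π a))) = star (π (g (Q.π a)))
          rw [← Q.map_star', key, key, map_star] }
    refine ⟨l, ρ, ?_, ?_⟩
    · -- irreducibility of ρ
      intro T hT
      refine hirr T fun a => ?_
      have := hT (Q.π a)
      show Commute T (π a)
      rw [← key a]
      exact this
    · -- factorization
      intro a
      exact (key a).symm
  · rintro ⟨l₀, ρ, hirrρ, hfac⟩ T hT
    refine hirrρ T fun b => ?_
    obtain ⟨a, rfl⟩ := (Qs l₀).surj b
    have := hT a
    rwa [hfac a] at this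
end
end

section
/- Let S be a local operator system generating the unital locally C*-algebra A and π: A → B(H) a local representation. Then π is a local boundary representation for S (irreducible and the unique local CP extension of π|_S to A) if and only if there exist λ₀ ∈ Λ and a boundary representation π_{λ₀}: A_{λ₀} → B(H) for the operator system S_{λ₀} with π = π_{λ₀} ∘ π^A_{λ₀}, such that for every λ ≥ λ₀ the representation π_{λ₀} ∘ π^A_{λλ₀} is a boundary representation for S_λ. -/
noncomputable section

open scoped ComplexOrder

section Aux

variable {Λ A : Type*} [Preorder Λ] [Ring A] [StarRing A] [Algebra ℂ A] [StarModule ℂ A] [TopologicalSpace A]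
variable {H : Type*} [NormedAddCommGroup H] [InnerProductSpace ℂ H] [CompleteSpace H]

lemma LCS.p_nonneg (L : LCS Λ A) (l : Λ) (a : A) : 0 ≤ L.p l a := by
  have h := L.seminorm l
  have h1 : L.p l ((-1 : ℂ) • a) = L.p l a := by
    rw [h.smul_eq]; simp
  have h2 := h.add_le a ((-1 : ℂ) • a)
  have h3 : a + (-1 : ℂ) • a = 0 := by simp
  rw [h3, h.map_zero, h1] at h2
  linarith

lemma matLPos_mono (L : LCS Λ A) {l l' : Λ} (hl : l ≤ l') {n : ℕ}
    {a : Matrix (Fin n) (Fin n) A} (ha : MatLPos L l' a) : MatLPos L l a := by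
  obtain ⟨b, hb⟩ := ha
  exact ⟨b, fun j k => le_antisymm (by rw [← hb j k]; exact L.mono hl _) (L.p_nonneg l _)⟩

lemma lambdaCPA_mono (L : LCS Λ A) {l l' : Λ} (hl : l ≤ l')
    {ψ : A →ₗ[ℂ] (H →L[ℂ] H)} (hψ : LambdaCPA L l ψ) : LambdaCPA L l' ψ := by
  refine ⟨fun n a ha ξ => hψ.1 n a (matLPos_mono L hl ha) ξ, fun a h0 => ?_⟩
  exact hψ.2 a (le_antisymm (h0 ▸ L.mono hl a) (L.p_nonneg l a))

end Aux

/-- a local representation `π : A → B(H)` is a local boundary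
representation for `S` iff there is `λ₀` such that `π` factors as a boundary
representation of `A_{λ₀}` for `S_{λ₀}` and for every `λ ≥ λ₀` the induced
representation of `A_λ` is a boundary representation for `S_λ`. -/
theorem statement13 {Λ A : Type*} [Preorder Λ] [IsDirected Λ (· ≤ ·)] [Ring A]
    [StarRing A] [Algebra ℂ A] [StarModule ℂ A] [TopologicalSpace A] [IsTopologicalRing A]
    {H : Type*} [NormedAddCommGroup H] [InnerProductSpace ℂ H] [CompleteSpace H]
    (L : LCS Λ A) (S : Submodule ℂ A) (h1 : (1 : A) ∈ S) (hstar : ∀ a ∈ S, star a ∈ S)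
    (hgen : GeneratesLCS S)
    (π : A →⋆ₐ[ℂ] (H →L[ℂ] H)) (hπ : IsLocalRep L π) :
    IsLocalBoundaryRep L S π ↔
      ∃ l₀ : Λ, IsBoundaryRepAt L S l₀ π ∧ ∀ l : Λ, l₀ ≤ l → IsBoundaryRepAt L S l π := by
  constructor
  · rintro ⟨⟨l₀, hl₀⟩, hirr, huniq⟩
    refine ⟨l₀, ⟨hl₀, hirr, fun ψ hψ hS => huniq ψ ⟨l₀, hψ⟩ hS⟩, fun l hl => ?_⟩
    exact ⟨fun a => (hl₀ a).trans (L.mono hl a), hirr,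
      fun ψ hψ hS => huniq ψ ⟨l, hψ⟩ hS⟩
  · rintro ⟨l₀, ⟨hrep, hirr, _⟩, hall⟩
    refine ⟨⟨l₀, hrep⟩, hirr, ?_⟩
    rintro ψ ⟨l, hψ⟩ hS
    obtain ⟨l', hl₀l', hll'⟩ := directed_of (· ≤ ·) l₀ l
    exact (hall l' hl₀l').2.2 ψ (lambdaCPA_mono L hll' hψ) hS
end
end
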